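/- arXiv:2203.14515 — 3 statements merged into one kernel-verified Lean document; each statement's English description precedes it below -/
import Mathlib

section
/- Let V be a PVF on M(R^n) satisfying (H:bound) with constant C > 0, let T > 0, and let mu0 be a compactly supported probability measure with supp(mu0) contained in B(0,R). Let mu^N_l be the lattice approximate solution (LAS) for the MDE dmu/dt = V[mu] with initial datum mu0. Then for every l such that l Delta_N <= T it holds: supp(mu^N_l) is contained in B(0, e^{C_N T}(R_N + 1) - 1), where C_N = C + sqrt(n)/N and R_N = R + sqrt(n)/N^2. -/
open MeasureTheory Set Metric Filter ENNReal RealInnerProductSpace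

noncomputable section

/-- Euclidean space `ℝ^n`. -/
abbrev Euc (n : ℕ) := EuclideanSpace ℝ (Fin n)

/-- `τ` is a transference plan between `μ` and `ν`. -/
def IsPlan {X Y : Type*} [MeasurableSpace X] [MeasurableSpace Y]
    (τ : Measure (X × Y)) (μ : Measure X) (ν : Measure Y) : Prop :=
  τ.map Prod.fst = μ ∧ τ.map Prod.snd = ν

/-- Optimal transport cost with a general cost function. -/
def WassCost {X Y : Type*} [MeasurableSpace X] [MeasurableSpace Y]
    (c : X → Y → ℝ≥0∞) (μ : Measure X) (ν : Measure Y) : ℝ≥0∞ :=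
  sInf { r | ∃ τ : Measure (X × Y), IsPlan τ μ ν ∧ r = ∫⁻ p, c p.1 p.2 ∂τ }

/-- The Wasserstein distance `W(μ,ν)`. -/
def Wass {X : Type*} [MeasurableSpace X] [PseudoEMetricSpace X]
    (μ ν : Measure X) : ℝ≥0∞ :=
  WassCost (fun x y => edist x y) μ ν

/-- The generalized Wasserstein distance `W^g(μ,ν)`. -/
def GWass {X : Type*} [MeasurableSpace X] [PseudoEMetricSpace X]
    (μ ν : Measure X) : ℝ≥0∞ :=
  sInf { r | ∃ μ' ν' : Measure X, μ' ≤ μ ∧ ν' ≤ ν ∧ μ' univ = ν' univ ∧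
    r = (μ univ - μ' univ) + (ν univ - ν' univ) + Wass μ' ν' }

/-- `τ` is an optimal transference plan between `μ` and `ν`. -/
def IsOptPlan {X : Type*} [MeasurableSpace X] [PseudoEMetricSpace X]
    (τ : Measure (X × X)) (μ ν : Measure X) : Prop :=
  IsPlan τ μ ν ∧ ∫⁻ p, edist p.1 p.2 ∂τ = Wass μ ν

/-- `(μ',ν')` attains the infimum in the definition of `W^g(μ,ν)`. -/
def IsGWassMinimizer {X : Type*} [MeasurableSpace X] [PseudoEMetricSpace X]
    (μ ν μ' ν' : Measure X) : Prop :=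
  μ' ≤ μ ∧ ν' ≤ ν ∧ μ' univ = ν' univ ∧
  (μ univ - μ' univ) + (ν univ - ν' univ) + Wass μ' ν' = GWass μ ν

/-- The operator `𝒲^g` on measures on the tangent bundle `X × X`. -/
def WcalG {X : Type*} [MeasurableSpace X] [PseudoEMetricSpace X]
    (V₁ V₂ : Measure (X × X)) : ℝ≥0∞ :=
  sInf { r | ∃ (W₁ W₂ : Measure (X × X)) (T : Measure ((X × X) × (X × X))),
    W₁ ≤ V₁ ∧ W₂ ≤ V₂ ∧ IsPlan T W₁ W₂ ∧
    IsGWassMinimizer (V₁.map Prod.fst) (V₂.map Prod.fst)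
      (W₁.map Prod.fst) (W₂.map Prod.fst) ∧
    IsOptPlan (T.map (fun p => (p.1.1, p.2.1))) (W₁.map Prod.fst) (W₂.map Prod.fst) ∧
    r = ∫⁻ p, edist p.1.2 p.2.2 ∂T }

/-- `μ` is concentrated on the set `s` (i.e. `supp μ ⊆ s` for closed `s`). -/
def ConcOn {X : Type*} [MeasurableSpace X] (μ : Measure X) (s : Set X) : Prop :=
  μ sᶜ = 0

/-- `μ` belongs to `M(X)`: positive measure with finite mass and compact support. -/
def MemM {X : Type*} [MeasurableSpace X] [NormedAddCommGroup X] (μ : Measure X) : Prop :=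
  μ univ ≠ ∞ ∧ ∃ R : ℝ, ConcOn μ (closedBall 0 R)

/-- `V` is a probability vector field: `π₁ # V[μ] = μ`. -/
def IsPVF {X : Type*} [MeasurableSpace X] (V : Measure X → Measure (X × X)) : Prop :=
  ∀ μ : Measure X, (V μ).map Prod.fst = μ

/-- (H:bound): support sublinearity of the PVF `V` with constant `C`. -/
def HBound {X : Type*} [MeasurableSpace X] [NormedAddCommGroup X]
    (V : Measure X → Measure (X × X)) (C : ℝ) : Prop :=
  0 < C ∧ ∀ (μ : Measure X) (R : ℝ), 0 ≤ R → ConcOn μ (closedBall 0 R) →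
    ConcOn (V μ) {p : X × X | ‖p.2‖ ≤ C * (1 + R)}

/-- (OM:Lip-g): local Lipschitz continuity of the ODE vector field `g`. -/
def OMLipg (m n : ℕ) (g : Euc m → Measure (Euc n) → Euc m) : Prop :=
  ∀ R : ℝ, 0 < R → ∃ L : ℝ, 0 < L ∧
    ∀ (x y : Euc m) (μ ν : Measure (Euc n)), ‖x‖ ≤ R → ‖y‖ ≤ R →
      MemM μ → MemM ν → ConcOn μ (closedBall 0 R) → ConcOn ν (closedBall 0 R) →
      ENNReal.ofReal ‖g x μ - g y ν‖ ≤
        ENNReal.ofReal L * (ENNReal.ofReal ‖x - y‖ + GWass μ ν)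

/-- (OM:Lip-V): local Lipschitz continuity of the PVF `V` w.r.t. `𝒲^g` and `W^g`. -/
def OMLipV (n : ℕ) (V : Measure (Euc n) → Measure (Euc n × Euc n)) : Prop :=
  ∀ R : ℝ, 0 < R → ∃ K : ℝ, 0 < K ∧
    ∀ μ ν : Measure (Euc n), MemM μ → MemM ν →
      ConcOn μ (closedBall 0 R) → ConcOn ν (closedBall 0 R) →
      WcalG (V μ) (V ν) ≤ ENNReal.ofReal K * GWass μ ν

/-- (OM:bound-s): uniform bound on support and mass of the source `s`. -/
def OMBoundS (m n : ℕ) (src : Measure (Euc n) → Euc m → Measure (Euc n)) : Prop :=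
  ∃ Rbar : ℝ, 0 < Rbar ∧ ∀ (μ : Measure (Euc n)) (x : Euc m),
    ConcOn (src μ x) (closedBall 0 Rbar) ∧ (src μ x) univ ≤ ENNReal.ofReal Rbar

/-- (OM:Lip-s): Lipschitz continuity of the source `s`. -/
def OMLipS (m n : ℕ) (src : Measure (Euc n) → Euc m → Measure (Euc n)) : Prop :=
  ∃ M : ℝ, 0 < M ∧ ∀ (x y : Euc m) (μ ν : Measure (Euc n)), MemM μ → MemM ν →
    GWass (src μ x) (src ν y) ≤
      ENNReal.ofReal M * (ENNReal.ofReal ‖x - y‖ + GWass μ ν)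

/-- A solution of the coupled ODE-MDE system `ẋ = g(x,μ)`, `μ̇ = V[μ] + s[μ,x]`
on `[0,T]` with initial datum `(x₀,μ₀)` (weak formulation in integral form). -/
def IsSolODEMDE (m n : ℕ) (T : ℝ)
    (g : Euc m → Measure (Euc n) → Euc m)
    (V : Measure (Euc n) → Measure (Euc n × Euc n))
    (src : Measure (Euc n) → Euc m → Measure (Euc n))
    (x0 : Euc m) (μ0 : Measure (Euc n))
    (x : ℝ → Euc m) (μ : ℝ → Measure (Euc n)) : Prop :=
  (∀ t ∈ Icc 0 T, x t = x0 + ∫ τ in (0:ℝ)..t, g (x τ) (μ τ)) ∧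
  μ 0 = μ0 ∧
  (∃ C : ℝ≥0∞, C ≠ ∞ ∧ ∀ t ∈ Icc 0 T, μ t univ ≤ C) ∧
  (∀ f : Euc n → ℝ, ContDiff ℝ (⊤ : ℕ∞) f → HasCompactSupport f →
    ∀ t ∈ Icc 0 T,
      ∫ y, f y ∂(μ t) = (∫ y, f y ∂μ0) +
        ∫ s in (0:ℝ)..t,
          ((∫ p : Euc n × Euc n, ⟪gradient f p.1, p.2⟫ ∂(V (μ s))) +
           (∫ y, f y ∂(src (μ s) (x s)))))

/-- A Lipschitz semigroup for the coupled ODE-MDE system, with components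
`S¹ : [0,T] × ℝ^m × M(ℝ^n) → ℝ^m` and `S² : [0,T] × ℝ^m × M(ℝ^n) → M(ℝ^n)`. -/
def IsLipSemigroup (m n : ℕ) (T : ℝ)
    (g : Euc m → Measure (Euc n) → Euc m)
    (V : Measure (Euc n) → Measure (Euc n × Euc n))
    (src : Measure (Euc n) → Euc m → Measure (Euc n))
    (S1 : ℝ → Euc m → Measure (Euc n) → Euc m)
    (S2 : ℝ → Euc m → Measure (Euc n) → Measure (Euc n)) : Prop :=
  (∀ (x : Euc m) (μ : Measure (Euc n)), MemM μ → S1 0 x μ = x ∧ S2 0 x μ = μ) ∧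
  (∀ s t : ℝ, 0 ≤ s → 0 ≤ t → s + t ≤ T →
    ∀ (x : Euc m) (μ : Measure (Euc n)), MemM μ →
      S1 t (S1 s x μ) (S2 s x μ) = S1 (t + s) x μ ∧
      S2 t (S1 s x μ) (S2 s x μ) = S2 (t + s) x μ) ∧
  (∀ (x : Euc m) (μ : Measure (Euc n)), MemM μ →
    IsSolODEMDE m n T g V src x μ (fun t => S1 t x μ) (fun t => S2 t x μ)) ∧
  (∀ R M : ℝ, 0 < R → 0 < M → ∃ C : ℝ, 0 < C ∧
    ∀ (x y : Euc m) (μ ν : Measure (Euc n)), MemM μ → MemM ν →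
      ‖x‖ ≤ M → ‖y‖ ≤ M →
      ConcOn μ (closedBall 0 R) → ConcOn ν (closedBall 0 R) →
      μ univ + ν univ ≤ ENNReal.ofReal M →
      ∀ s ∈ Icc (0:ℝ) T, ∀ t ∈ Icc (0:ℝ) T,
        ‖S1 t x μ‖ ≤ C ∧
        ConcOn (S2 t x μ) (closedBall 0 (Real.exp (C * t) * (R + M + 1))) ∧
        ENNReal.ofReal ‖S1 t x μ - S1 t y ν‖ + GWass (S2 t x μ) (S2 t y ν) ≤
          ENNReal.ofReal (Real.exp (C * t)) * (ENNReal.ofReal ‖x - y‖ + GWass μ ν) ∧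
        ENNReal.ofReal ‖S1 t x μ - S1 s x μ‖ + GWass (S2 t x μ) (S2 s x μ) ≤
          ENNReal.ofReal (C * |t - s|))

/-! ### Lattice discretization in `ℝ^n` -/

/-- Index set for the spatial grid `ℤ^n/N² ∩ [-N,N]^n`. -/
def XIdx (n N : ℕ) : Type := {i : Fin n → ℤ // ∀ k, |i k| ≤ (N : ℤ) ^ 3}

/-- Index set for the velocity grid `ℤ^n/N ∩ [-N,N]^n`. -/
def VIdx (n N : ℕ) : Type := {j : Fin n → ℤ // ∀ k, |j k| ≤ (N : ℤ) ^ 2}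

instance (n N : ℕ) : Countable (XIdx n N) := by unfold XIdx; infer_instance
instance (n N : ℕ) : Countable (VIdx n N) := by unfold VIdx; infer_instance

/-- The spatial grid point `x_i ∈ ℤ^n/N²`. -/
def gridX (n N : ℕ) (i : XIdx n N) : Euc n :=
  (EuclideanSpace.equiv (Fin n) ℝ).symm (fun k => (i.1 k : ℝ) / (N : ℝ) ^ 2)

/-- The velocity grid point `v_j ∈ ℤ^n/N`. -/
def gridV (n N : ℕ) (j : VIdx n N) : Euc n :=
  (EuclideanSpace.equiv (Fin n) ℝ).symm (fun k => (j.1 k : ℝ) / (N : ℝ))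

/-- The spatial cell `x_i + Q`, `Q = [0,1/N²)^n`. -/
def cellX (n N : ℕ) (i : XIdx n N) : Set (Euc n) :=
  {y | ∀ k, gridX n N i k ≤ y k ∧ y k < gridX n N i k + 1 / (N : ℝ) ^ 2}

/-- The mass `m^x_i(μ) = μ(x_i + Q)`. -/
def mx (n N : ℕ) (μ : Measure (Euc n)) (i : XIdx n N) : ℝ≥0∞ := μ (cellX n N i)

/-- The spatial discretization operator `𝒜^x_N`. -/
def AxN (n N : ℕ) (μ : Measure (Euc n)) : Measure (Euc n) :=
  Measure.sum (fun i : XIdx n N => mx n N μ i • Measure.dirac (gridX n N i))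

/-- The mass `m^v_{ij}(W) = W({(x_i, v) : v ∈ v_j + Q'})`, `Q' = [0,1/N)^n`. -/
def mv (n N : ℕ) (W : Measure (Euc n × Euc n)) (i : XIdx n N) (j : VIdx n N) : ℝ≥0∞ :=
  W {p | p.1 = gridX n N i ∧
    ∀ k, gridV n N j k ≤ p.2 k ∧ p.2 k < gridV n N j k + 1 / (N : ℝ)}

/-- The velocity discretization operator `𝒜^v_N` applied to a measure on `T ℝ^n`. -/
def AvN (n N : ℕ) (W : Measure (Euc n × Euc n)) : Measure (Euc n × Euc n) :=
  Measure.sum (fun ij : XIdx n N × VIdx n N =>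
    mv n N W ij.1 ij.2 • Measure.dirac (gridX n N ij.1, gridV n N ij.2))

/-- Euler-LAS approximate solutions of the coupled ODE-MDE system at the
discrete times `ℓ Δ_N`: `(x^N_ℓ, μ^N_ℓ)`. -/
def eulerLAS (m n : ℕ) (g : Euc m → Measure (Euc n) → Euc m)
    (V : Measure (Euc n) → Measure (Euc n × Euc n))
    (src : Measure (Euc n) → Euc m → Measure (Euc n))
    (N : ℕ) (x0 : Euc m) (μ0 : Measure (Euc n)) : ℕ → Euc m × Measure (Euc n)
  | 0 => (x0, AxN n N μ0)
  | l + 1 =>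
    let p := eulerLAS m n g V src N x0 μ0 l
    (p.1 + (1 / (N : ℝ)) • g p.1 p.2,
      Measure.sum (fun ij : XIdx n N × VIdx n N =>
        mv n N (V p.2) ij.1 ij.2 •
          Measure.dirac (gridX n N ij.1 + (1 / (N : ℝ)) • gridV n N ij.2)) +
      ENNReal.ofReal (1 / (N : ℝ)) • AxN n N (src p.2 p.1))

/-- The Euler-LAS approximate solution interpolated at time `t`. -/
def eulerLASt (m n : ℕ) (g : Euc m → Measure (Euc n) → Euc m)
    (V : Measure (Euc n) → Measure (Euc n × Euc n))
    (src : Measure (Euc n) → Euc m → Measure (Euc n))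
    (N : ℕ) (x0 : Euc m) (μ0 : Measure (Euc n)) (t : ℝ) : Euc m × Measure (Euc n) :=
  let l : ℕ := ⌊t * (N : ℝ)⌋₊
  let τ : ℝ := t - (l : ℝ) / (N : ℝ)
  let p := eulerLAS m n g V src N x0 μ0 l
  (p.1 + τ • g p.1 p.2,
    Measure.sum (fun ij : XIdx n N × VIdx n N =>
      mv n N (V p.2) ij.1 ij.2 •
        Measure.dirac (gridX n N ij.1 + τ • gridV n N ij.2)) +
    ENNReal.ofReal τ • AxN n N (src p.2 p.1))

/-- The lattice approximate solution (LAS) for the MDE `μ̇ = V[μ]` at the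
discrete times `ℓ Δ_N`. -/
def LAS (n : ℕ) (V : Measure (Euc n) → Measure (Euc n × Euc n))
    (N : ℕ) (μ0 : Measure (Euc n)) : ℕ → Measure (Euc n)
  | 0 => AxN n N μ0
  | l + 1 =>
    Measure.sum (fun ij : XIdx n N × VIdx n N =>
      mv n N (V (LAS n V N μ0 l)) ij.1 ij.2 •
        Measure.dirac (gridX n N ij.1 + (1 / (N : ℝ)) • gridV n N ij.2))

lemma euc_norm_le {n : ℕ} (a : Euc n) (c : ℝ) (hc : 0 ≤ c) (h : ∀ k, |a k| ≤ c) :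
    ‖a‖ ≤ Real.sqrt n * c := by
  rw [EuclideanSpace.norm_eq]
  have h1 : ∑ k, ‖a k‖^2 ≤ (n : ℝ) * c^2 := by
    calc ∑ k, ‖a k‖^2 ≤ ∑ _k : Fin n, c^2 := by
          apply Finset.sum_le_sum
          intro k _
          have := h k
          rw [Real.norm_eq_abs]
          nlinarith [abs_nonneg (a k)]
      _ = (n : ℝ) * c^2 := by simp [mul_comm]
  calc Real.sqrt (∑ k, ‖a k‖^2) ≤ Real.sqrt ((n:ℝ) * c^2) := Real.sqrt_le_sqrt h1
    _ = Real.sqrt n * c := by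
        rw [Real.sqrt_mul (by positivity), Real.sqrt_sq hc]

lemma concOn_sum_dirac {X : Type*} [MeasurableSpace X] {ι : Type*} [Countable ι]
    (c : ι → ℝ≥0∞) (pt : ι → X) (s : Set X) (hs : MeasurableSet s)
    (h : ∀ i, c i = 0 ∨ pt i ∈ s) :
    (Measure.sum (fun i => c i • Measure.dirac (pt i))) sᶜ = 0 := by
  rw [Measure.sum_apply _ hs.compl]
  refine ENNReal.tsum_eq_zero.mpr fun i => ?_
  rcases h i with h0 | hmem
  · simp [h0]
  · rw [Measure.smul_apply, Measure.dirac_apply' _ hs.compl]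
    simp [hmem]
set_option maxHeartbeats 1600000 in
/-- **Lemma (uniform support bound for lattice approximate solutions).** -/
theorem LAS_support_bound (n : ℕ)
    (V : Measure (Euc n) → Measure (Euc n × Euc n)) (hPVF : IsPVF V)
    (C : ℝ) (hV : HBound V C) (T : ℝ) (hT : 0 < T)
    (μ0 : Measure (Euc n)) (hprob : IsProbabilityMeasure μ0)
    (R : ℝ) (hR : 0 ≤ R) (hsupp : ConcOn μ0 (closedBall 0 R))
    (N : ℕ) (hN : 1 ≤ N) :
    ∀ l : ℕ, (l : ℝ) * (1 / (N : ℝ)) ≤ T →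
      ConcOn (LAS n V N μ0 l)
        (closedBall 0
          (Real.exp ((C + Real.sqrt n / (N : ℝ)) * T) *
            ((R + Real.sqrt n / (N : ℝ) ^ 2) + 1) - 1)) := by
  have hN0 : (0:ℝ) < N := by exact_mod_cast Nat.pos_of_ne_zero (by omega)
  have hNne : (N:ℝ) ≠ 0 := hN0.ne'
  have hQ1 : (0:ℝ) < 1/(N:ℝ) := by positivity
  have hQ2 : (0:ℝ) < 1/(N:ℝ)^2 := by positivity
  have hC : 0 < C := hV.1
  have hsq : 0 ≤ Real.sqrt n := Real.sqrt_nonneg n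
  set CN : ℝ := C + Real.sqrt n / N with hCNdef
  set RN : ℝ := R + Real.sqrt n / (N:ℝ)^2 with hRNdef
  have hCN : 0 < CN := by positivity
  have hRN : 0 ≤ RN := by positivity
  set b : ℝ := 1 + CN / N with hbdef
  have hb : 1 ≤ b := le_add_of_nonneg_right (by positivity)
  have hb0 : 0 ≤ b := by linarith
  have key : ∀ l : ℕ, (LAS n V N μ0 l) (closedBall 0 (b^l * (RN+1) - 1))ᶜ = 0 := by
    intro l
    induction l with
    | zero =>
      show (AxN n N μ0) _ = 0
      unfold AxN
      apply concOn_sum_dirac _ _ _ measurableSet_closedBall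
      intro i
      by_cases hin : gridX n N i ∈ closedBall (0:Euc n) (b^0*(RN+1)-1)
      · exact Or.inr hin
      · left
        unfold mx
        apply measure_mono_null _ hsupp
        intro y hy
        simp only [cellX, mem_setOf_eq] at hy
        simp only [mem_compl_iff, mem_closedBall_zero_iff, not_le]
        by_contra hc
        push_neg at hc
        apply hin
        rw [mem_closedBall_zero_iff]
        have hd : ‖gridX n N i - y‖ ≤ Real.sqrt n * (1/(N:ℝ)^2) := by
          apply euc_norm_le _ _ (by positivity)
          intro k
          have hk : (gridX n N i - y) k = gridX n N i k - y k := by simp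
          rw [hk, abs_le]
          constructor <;> [linarith [(hy k).2]; linarith [(hy k).1, hQ2.le]]
        have h2 : gridX n N i = y + (gridX n N i - y) := by abel
        have h3 : ‖gridX n N i‖ ≤ ‖y‖ + ‖gridX n N i - y‖ := by
          nth_rewrite 1 [h2]; exact norm_add_le _ _
        have heq0 : b^0*(RN+1)-1 = RN := by rw [pow_zero]; ring
        rw [heq0, hRNdef]
        have : Real.sqrt n * (1/(N:ℝ)^2) = Real.sqrt n / (N:ℝ)^2 := by ring
        linarith
    | succ l ih =>
      have honep : (1:ℝ) ≤ b^l := one_le_pow₀ hb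
      have hBl : 0 ≤ b^l*(RN+1)-1 := by nlinarith
      set Bl : ℝ := b^l*(RN+1)-1 with hBldef
      have hG1 : (V (LAS n V N μ0 l)) ((Prod.fst ⁻¹' closedBall (0:Euc n) Bl)ᶜ) = 0 := by
        rw [← Set.preimage_compl,
          ← Measure.map_apply measurable_fst measurableSet_closedBall.compl, hPVF]
        exact ih
      have hG2 : (V (LAS n V N μ0 l)) {p : Euc n × Euc n | ‖p.2‖ ≤ C*(1+Bl)}ᶜ = 0 :=
        hV.2 (LAS n V N μ0 l) Bl hBl ih
      show (Measure.sum _) _ = 0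
      apply concOn_sum_dirac _ _ _ measurableSet_closedBall
      intro ij
      by_cases hin : gridX n N ij.1 + (1/(N:ℝ)) • gridV n N ij.2 ∈
          closedBall (0:Euc n) (b^(l+1)*(RN+1)-1)
      · exact Or.inr hin
      · left
        unfold mv
        apply measure_mono_null _ (measure_union_null hG1 hG2)
        intro p hp
        simp only [mem_setOf_eq] at hp
        by_contra hcon
        simp only [mem_union, mem_compl_iff, mem_preimage, mem_closedBall_zero_iff,
          mem_setOf_eq, not_or, not_not] at hcon
        apply hin
        rw [mem_closedBall_zero_iff]
        have hx : ‖gridX n N ij.1‖ ≤ Bl := by rw [← hp.1]; exact hcon.1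
        have hvd : ‖gridV n N ij.2 - p.2‖ ≤ Real.sqrt n * (1/(N:ℝ)) := by
          apply euc_norm_le _ _ (by positivity)
          intro k
          have hk : (gridV n N ij.2 - p.2) k = gridV n N ij.2 k - p.2 k := by simp
          rw [hk, abs_le]
          constructor <;> [linarith [(hp.2 k).2]; linarith [(hp.2 k).1, hQ1.le]]
        have hv : ‖gridV n N ij.2‖ ≤ CN * (1 + Bl) := by
          have h2 : gridV n N ij.2 = p.2 + (gridV n N ij.2 - p.2) := by abel
          have h3 : ‖gridV n N ij.2‖ ≤ ‖p.2‖ + ‖gridV n N ij.2 - p.2‖ := by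
            nth_rewrite 1 [h2]; exact norm_add_le _ _
          have h4 : ‖p.2‖ ≤ C * (1 + Bl) := hcon.2
          have h5 : Real.sqrt n / (N:ℝ) ≤ Real.sqrt n / (N:ℝ) * (1 + Bl) := by
            nlinarith [div_nonneg hsq hN0.le]
          have h6 : Real.sqrt n * (1/(N:ℝ)) = Real.sqrt n / (N:ℝ) := by ring
          rw [hCNdef]
          nlinarith
        have hpt : ‖gridX n N ij.1 + (1/(N:ℝ)) • gridV n N ij.2‖ ≤
            Bl + (1/(N:ℝ)) * (CN * (1 + Bl)) := by
          calc ‖gridX n N ij.1 + (1/(N:ℝ)) • gridV n N ij.2‖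
              ≤ ‖gridX n N ij.1‖ + ‖(1/(N:ℝ)) • gridV n N ij.2‖ := norm_add_le _ _
            _ = ‖gridX n N ij.1‖ + (1/(N:ℝ)) * ‖gridV n N ij.2‖ := by
                rw [norm_smul, Real.norm_eq_abs, abs_of_pos (by positivity)]
            _ ≤ Bl + (1/(N:ℝ)) * (CN * (1 + Bl)) := by
                have h7 := mul_le_mul_of_nonneg_left hv hQ1.le
                linarith
        have heq : Bl + (1/(N:ℝ)) * (CN * (1 + Bl)) = b^(l+1)*(RN+1)-1 := by
          have h8 : b^(l+1) = b^l * b := pow_succ b l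
          rw [h8, hBldef, hbdef]
          field_simp
          ring
        exact hpt.trans heq.le
  intro l hl
  have hexp : b^l ≤ Real.exp (CN * T) := by
    have h1 : b ≤ Real.exp (CN/N) := by
      have := Real.add_one_le_exp (CN/(N:ℝ))
      rw [hbdef]; linarith
    have h2 : b^l ≤ (Real.exp (CN/(N:ℝ)))^l := pow_le_pow_left₀ hb0 h1 l
    rw [← Real.exp_nat_mul] at h2
    have h3 : (l:ℝ) * (CN/(N:ℝ)) ≤ CN * T := by
      have e : (l:ℝ)*(CN/(N:ℝ)) = CN * ((l:ℝ)*(1/(N:ℝ))) := by ring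
      rw [e]; exact mul_le_mul_of_nonneg_left hl hCN.le
    exact le_trans h2 (Real.exp_le_exp.mpr h3)
  have hmono : closedBall (0:Euc n) (b^l*(RN+1)-1) ⊆
      closedBall 0 (Real.exp (CN*T)*(RN+1)-1) := by
    apply closedBall_subset_closedBall
    nlinarith
  exact measure_mono_null (compl_subset_compl.mpr hmono) (key l)
end
end

section
/- Let phi : [0,1] -> R be increasing and of class C^1 with phi' > 0 (so phi is a diffeomorphism onto [phi(0), phi(1)]). For t > 0 define g(t,x) = (1/t) (phi^{-1})'(x/t) for x in [t phi(0), t phi(1)] and g(t,x) = 0 otherwise, and set mu(t) = g(t,.) lambda (lambda the Lebesgue measure), mu(0) = delta_0. Then: (i) each mu(t), t > 0, is a probability measure whose normalized cumulative distribution satisfies G_{mu(t)}(x) = phi^{-1}(x/t) for x in [t phi(0), t phi(1)]; (ii) for every f in C_c^infinity(R) the map t -> integral of f(x) g(t,x) dx tends to f(0) as t -> 0+, and for every t > 0, d/dt of the integral of f(x) g(t,x) dx = integral of f'(x) (x/t) g(t,x) dx = integral of f'(x) phi(G_{mu(t)}(x)) d mu(t)(x); i.e. mu is the solution of the MDE dmu/dt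 = V_phi[mu] with initial datum delta_0. -/
open MeasureTheory Set Metric Filter ENNReal

noncomputable section

/-- **Proposition (explicit solution of the MDE `μ̇ = V_φ[μ]` from `δ₀` when `φ` is a
diffeomorphism): the density `g(t,x) = (1/t)(φ⁻¹)'(x/t)` on `[tφ(0), tφ(1)]`.** -/
theorem Vphi_diffeomorphism_solution
    (φ ψ : ℝ → ℝ)
    (hφC : ContDiff ℝ 1 φ)
    (hmono : StrictMonoOn φ (Icc 0 1))
    (hφd : ∀ a ∈ Icc (0:ℝ) 1, 0 < deriv φ a)
    -- `ψ = φ⁻¹` on `[φ(0), φ(1)]`: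
    (hψφ : ∀ a ∈ Icc (0:ℝ) 1, ψ (φ a) = a)
    (hφψ : ∀ x ∈ Icc (φ 0) (φ 1), φ (ψ x) = x)
    (hψd : ∀ x ∈ Icc (φ 0) (φ 1), HasDerivAt ψ (deriv ψ x) x) :
    -- the density `g(t,·)` and the curve of measures `μ(t) = g(t,·)λ`, `μ(0) = δ₀`:
    let g : ℝ → ℝ → ℝ := fun t x =>
      if x ∈ Icc (t * φ 0) (t * φ 1) then (1 / t) * deriv ψ (x / t) else 0
    let μ : ℝ → Measure ℝ := fun t =>
      if 0 < t then volume.withDensity (fun x => ENNReal.ofReal (g t x))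
      else Measure.dirac 0
    -- (i) each `μ(t)`, `t > 0`, is a probability measure with normalized cumulative
    -- distribution `G_{μ(t)}(x) = φ⁻¹(x/t)` on `[tφ(0), tφ(1)]`:
    (∀ t : ℝ, 0 < t → IsProbabilityMeasure (μ t) ∧
      ∀ x ∈ Icc (t * φ 0) (t * φ 1),
        (μ t) (Iic x) / (μ t) univ = ENNReal.ofReal (ψ (x / t))) ∧
    -- (ii) `μ` solves the MDE `μ̇ = V_φ[μ]` with initial datum `δ₀`:
    (∀ f : ℝ → ℝ, ContDiff ℝ (⊤ : ℕ∞) f → HasCompactSupport f →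
      Tendsto (fun t : ℝ => ∫ x, f x * g t x) (nhdsWithin 0 (Ioi 0)) (nhds (f 0)) ∧
      ∀ t : ℝ, 0 < t →
        HasDerivAt (fun s : ℝ => ∫ x, f x * g s x)
          (∫ x, deriv f x * (x / t) * g t x) t ∧
        ∫ x, deriv f x * (x / t) * g t x =
          ∫ x, deriv f x * φ (((μ t) (Iic x) / (μ t) univ).toReal) ∂(μ t)) := by
  intro g μ
  have h01 : (0:ℝ) ≤ 1 := zero_le_one
  have h0m : (0:ℝ) ∈ Icc (0:ℝ) 1 := left_mem_Icc.2 h01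
  have h1m : (1:ℝ) ∈ Icc (0:ℝ) 1 := right_mem_Icc.2 h01
  have hφ01 : φ 0 < φ 1 := hmono h0m h1m zero_lt_one
  have hle : φ 0 ≤ φ 1 := hφ01.le
  have hψ0 : ψ (φ 0) = 0 := hψφ 0 h0m
  have hψ1 : ψ (φ 1) = 1 := hψφ 1 h1m
  have hφcont : Continuous φ := hφC.continuous
  have hψmem : ∀ x ∈ Icc (φ 0) (φ 1), ψ x ∈ Icc (0:ℝ) 1 := by
    intro x hx
    obtain ⟨a, ha, rfl⟩ := intermediate_value_Icc h01 hφcont.continuousOn hx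
    rw [hψφ a ha]; exact ha
  have hψcont : ContinuousOn ψ (Icc (φ 0) (φ 1)) :=
    fun x hx => (hψd x hx).continuousAt.continuousWithinAt
  -- chain rule: `ψ' · (φ' ∘ ψ) = 1` on `[φ 0, φ 1]`
  have hchain : ∀ x ∈ Icc (φ 0) (φ 1), deriv ψ x * deriv φ (ψ x) = 1 := by
    intro x hx
    have haI : ψ x ∈ Icc (0:ℝ) 1 := hψmem x hx
    have hφa : φ (ψ x) = x := hφψ x hx
    have hφda : HasDerivAt φ (deriv φ (ψ x)) (ψ x) :=
      (hφC.differentiable one_ne_zero (ψ x)).hasDerivAt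
    have h1 : HasDerivAt ψ (deriv ψ x) (φ (ψ x)) := by rw [hφa]; exact hψd x hx
    have hcomp : HasDerivAt (ψ ∘ φ) (deriv ψ x * deriv φ (ψ x)) (ψ x) :=
      HasDerivAt.comp (ψ x) h1 hφda
    have hu : UniqueDiffWithinAt ℝ (Icc (0:ℝ) 1) (ψ x) :=
      (uniqueDiffOn_Icc zero_lt_one) (ψ x) haI
    have hW1 := (hcomp.hasDerivWithinAt (s := Icc (0:ℝ) 1)).derivWithin hu
    have hid : HasDerivWithinAt (ψ ∘ φ) 1 (Icc (0:ℝ) 1) (ψ x) :=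
      (hasDerivWithinAt_id (ψ x) (Icc (0:ℝ) 1)).congr
        (fun y hy => hψφ y hy) (hψφ (ψ x) haI)
    have hW2 := hid.derivWithin hu
    exact hW1.symm.trans hW2
  have hψdpos : ∀ x ∈ Icc (φ 0) (φ 1), 0 < deriv ψ x := by
    intro x hx
    have h := hchain x hx
    have hp := hφd (ψ x) (hψmem x hx)
    nlinarith
  have hψdcont : ContinuousOn (deriv ψ) (Icc (φ 0) (φ 1)) := by
    have hF : ContinuousOn (fun x => (deriv φ (ψ x))⁻¹) (Icc (φ 0) (φ 1)) :=
      (((hφC.continuous_deriv le_rfl).comp_continuousOn hψcont)).inv₀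
        (fun x hx => (hφd (ψ x) (hψmem x hx)).ne')
    refine hF.congr (fun x hx => ?_)
    have h := hchain x hx
    have hp := (hφd (ψ x) (hψmem x hx)).ne'
    field_simp
    linarith [hchain x hx]
  -- FTC
  have hFTC : ∀ x ∈ Icc (φ 0) (φ 1), ∫ y in (φ 0)..x, deriv ψ y = ψ x := by
    intro x hx
    have hsub : uIcc (φ 0) x ⊆ Icc (φ 0) (φ 1) := by
      rw [uIcc_of_le hx.1]; exact Icc_subset_Icc le_rfl hx.2
    have h := intervalIntegral.integral_eq_sub_of_hasDerivAt
      (fun y hy => hψd y (hsub hy)) ((hψdcont.mono hsub).intervalIntegrable)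
    rw [h, hψ0, sub_zero]
  -- mapping `[tφ0, tφ1] → [φ0, φ1]`
  have hmapsto : ∀ t : ℝ, 0 < t → ∀ x ∈ Icc (t * φ 0) (t * φ 1),
      x / t ∈ Icc (φ 0) (φ 1) := by
    intro t ht x hx
    constructor
    · rw [le_div_iff₀ ht]; linarith [hx.1, mul_comm t (φ 0)]
    · rw [div_le_iff₀ ht]; linarith [hx.2, mul_comm t (φ 1)]
  have hg_eq : ∀ t : ℝ, g t
      = (Icc (t * φ 0) (t * φ 1)).indicator (fun x => (1 / t) * deriv ψ (x / t)) := by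
    intro t; funext x
    by_cases hx : x ∈ Icc (t * φ 0) (t * φ 1)
    · rw [Set.indicator_of_mem hx]; simp only [g, if_pos hx]
    · rw [Set.indicator_of_notMem hx]; simp only [g, if_neg hx]
  have hind : ∀ (t : ℝ) (h : ℝ → ℝ), (fun x => h x * g t x)
      = (Icc (t * φ 0) (t * φ 1)).indicator
          (fun x => h x * ((1 / t) * deriv ψ (x / t))) := by
    intro t h; funext x
    by_cases hx : x ∈ Icc (t * φ 0) (t * φ 1)
    · rw [Set.indicator_of_mem hx]; simp only [g, if_pos hx]
    · rw [Set.indicator_of_notMem hx]; simp only [g, if_neg hx, mul_zero]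
  have hgcont : ∀ t : ℝ, 0 < t →
      ContinuousOn (fun x => (1 / t) * deriv ψ (x / t)) (Icc (t * φ 0) (t * φ 1)) := by
    intro t ht
    exact continuousOn_const.mul
      (hψdcont.comp (continuous_id.div_const t).continuousOn (hmapsto t ht))
  have hg_nonneg : ∀ t : ℝ, 0 < t → ∀ x, 0 ≤ g t x := by
    intro t ht x
    by_cases hx : x ∈ Icc (t * φ 0) (t * φ 1)
    · have hx' := hmapsto t ht x hx
      have := (hψdpos _ hx').le
      simp only [g, if_pos hx]
      positivity
    · simp only [g, if_neg hx]; exact le_rfl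
  have hg_meas : ∀ t : ℝ, Measurable (g t) := by
    intro t
    rw [hg_eq t]
    exact (((measurable_deriv ψ).comp (measurable_id.div_const t)).const_mul (1/t)).indicator
      measurableSet_Icc
  have hInt : ∀ t : ℝ, 0 < t → ∀ h : ℝ → ℝ, Continuous h →
      Integrable (fun x => h x * g t x) := by
    intro t ht h hh
    rw [hind t h]
    exact ((hh.continuousOn.mul (hgcont t ht)).integrableOn_Icc).integrable_indicator
      measurableSet_Icc
  -- scaling of interval integrals
  have hscale : ∀ (t : ℝ), 0 < t → ∀ (F : ℝ → ℝ) (a b : ℝ),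
      ∫ x in (t*a)..(t*b), F (x/t) = t * ∫ y in a..b, F y := by
    intro t ht F a b
    rw [intervalIntegral.integral_comp_div (f := F) ht.ne', mul_div_cancel_left₀ _ ht.ne',
      mul_div_cancel_left₀ _ ht.ne', smul_eq_mul]
  -- key change of variables
  have lemA : ∀ t : ℝ, 0 < t → ∀ h : ℝ → ℝ, Continuous h →
      ∫ x, h x * g t x = ∫ y in (φ 0)..(φ 1), h (t*y) * deriv ψ y := by
    intro t ht h hh
    have hle' : t * φ 0 ≤ t * φ 1 := by nlinarith
    rw [hind t h, integral_indicator measurableSet_Icc, integral_Icc_eq_integral_Ioc,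
      ← intervalIntegral.integral_of_le hle']
    have h2 : ∫ x in (t*φ 0)..(t*φ 1), h x * ((1/t) * deriv ψ (x/t))
        = ∫ x in (t*φ 0)..(t*φ 1),
            (fun y => (1/t) * (h (t*y) * deriv ψ y)) (x/t) := by
      apply intervalIntegral.integral_congr
      intro x hx
      have : t * (x / t) = x := by field_simp
      simp only [this]
      ring
    rw [h2, hscale t ht (fun y => (1/t) * (h (t*y) * deriv ψ y)) (φ 0) (φ 1),
      intervalIntegral.integral_const_mul]
    field_simp
  have hmass : ∀ t : ℝ, 0 < t → ∫ x, g t x = 1 := by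
    intro t ht
    have h := lemA t ht (fun _ => 1) continuous_const
    simp only [one_mul] at h
    rw [h, hFTC (φ 1) ⟨hle, le_rfl⟩, hψ1]
  have hμt : ∀ t : ℝ, 0 < t →
      μ t = volume.withDensity (fun x => ENNReal.ofReal (g t x)) := by
    intro t ht; simp only [μ, if_pos ht]
  have hgInt : ∀ t : ℝ, 0 < t → Integrable (g t) := by
    intro t ht
    have := hInt t ht (fun _ => 1) continuous_const
    simpa using this
  have huniv : ∀ t : ℝ, 0 < t → μ t univ = 1 := by
    intro t ht
    rw [hμt t ht, withDensity_apply _ MeasurableSet.univ, Measure.restrict_univ,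
      ← ofReal_integral_eq_lintegral_ofReal (hgInt t ht) (ae_of_all _ (hg_nonneg t ht)),
      hmass t ht, ENNReal.ofReal_one]
  have hcdf : ∀ t : ℝ, 0 < t → ∀ x ∈ Icc (t * φ 0) (t * φ 1),
      μ t (Iic x) = ENNReal.ofReal (ψ (x/t)) := by
    intro t ht x hx
    rw [hμt t ht, withDensity_apply _ measurableSet_Iic,
      ← ofReal_integral_eq_lintegral_ofReal ((hgInt t ht).integrableOn)
        (ae_of_all _ (hg_nonneg t ht))]
    congr 1
    have hset : Iic x ∩ Icc (t * φ 0) (t * φ 1) = Icc (t * φ 0) x := by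
      ext y
      simp only [mem_inter_iff, mem_Iic, mem_Icc]
      constructor
      · rintro ⟨hy1, hy2, _⟩; exact ⟨hy2, hy1⟩
      · rintro ⟨hy1, hy2⟩; exact ⟨hy2, hy1, hy2.trans hx.2⟩
    rw [hg_eq t]
    rw [setIntegral_indicator measurableSet_Icc, hset, integral_Icc_eq_integral_Ioc,
      ← intervalIntegral.integral_of_le hx.1]
    have hx' : x = t * (x / t) := by field_simp
    rw [show (∫ y in (t * φ 0)..x, 1 / t * deriv ψ (y / t))
        = ∫ y in (t * φ 0)..(t * (x/t)), (fun z => 1 / t * deriv ψ z) (y/t) from by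
      rw [← hx'],
      hscale t ht (fun z => 1 / t * deriv ψ z) (φ 0) (x/t),
      intervalIntegral.integral_const_mul,
      hFTC (x/t) (hmapsto t ht x hx)]
    field_simp
  have hcdfdiv : ∀ t : ℝ, 0 < t → ∀ x ∈ Icc (t * φ 0) (t * φ 1),
      μ t (Iic x) / μ t univ = ENNReal.ofReal (ψ (x/t)) := by
    intro t ht x hx
    rw [huniv t ht, hcdf t ht x hx]
    simp
  refine ⟨fun t ht => ⟨⟨huniv t ht⟩, fun x hx => hcdfdiv t ht x hx⟩, ?_⟩
  intro f hf hsupp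
  have hcf : Continuous f := hf.continuous
  have hf' : Continuous (deriv f) := hf.continuous_deriv (by simp)
  have hdf : Differentiable ℝ f := hf.differentiable (by simp)
  have hsupp' : HasCompactSupport (deriv f) := hsupp.deriv
  obtain ⟨C, hC⟩ := hsupp.exists_bound_of_continuous hcf
  obtain ⟨C', hC'⟩ := hsupp'.exists_bound_of_continuous hf'
  constructor
  · -- the limit as `t → 0⁺`
    have hkey : Tendsto (fun t => ∫ y in (φ 0)..(φ 1), f (t*y) * deriv ψ y)
        (nhdsWithin 0 (Ioi 0)) (nhds (f 0)) := by
      have h0 : f 0 = ∫ y in (φ 0)..(φ 1), f 0 * deriv ψ y := by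
        rw [intervalIntegral.integral_const_mul, hFTC (φ 1) ⟨hle, le_rfl⟩, hψ1, mul_one]
      rw [h0]
      apply intervalIntegral.tendsto_integral_filter_of_dominated_convergence
        (fun y => C * |deriv ψ y|)
      · filter_upwards with t
        exact ((hcf.comp (continuous_const.mul continuous_id)).aestronglyMeasurable.mul
          (measurable_deriv ψ).aestronglyMeasurable).restrict
      · filter_upwards with t
        apply ae_of_all
        intro y _
        rw [norm_mul]
        exact mul_le_mul_of_nonneg_right (hC _) (abs_nonneg _)
      · apply ContinuousOn.intervalIntegrable
        exact continuousOn_const.mul ((hψdcont.mono (by rw [uIcc_of_le hle])).abs)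
      · apply ae_of_all
        intro y _
        have h1 : Tendsto (fun t : ℝ => t * y) (nhdsWithin 0 (Ioi 0)) (nhds 0) := by
          have h2 : Continuous (fun t : ℝ => t * y) := continuous_id.mul continuous_const
          have h3 := h2.tendsto (0:ℝ)
          simpa using h3.mono_left nhdsWithin_le_nhds
        exact (((hcf.tendsto 0).comp h1).mul_const (deriv ψ y))
    apply hkey.congr'
    filter_upwards [self_mem_nhdsWithin] with t ht
    exact (lemA t ht f hcf).symm
  · intro t ht
    have hM : ∀ y ∈ uIoc (φ 0) (φ 1), |y| ≤ |φ 0| + |φ 1| := by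
      intro y hy
      rw [uIoc_of_le hle] at hy
      rw [abs_le]
      constructor
      · linarith [neg_abs_le (φ 0), hy.1.le, abs_nonneg (φ 1)]
      · linarith [le_abs_self (φ 1), hy.2, abs_nonneg (φ 0)]
    -- differentiation under the integral
    have hder := (intervalIntegral.hasDerivAt_integral_of_dominated_loc_of_deriv_le
      (F := fun s y => f (s*y) * deriv ψ y)
      (F' := fun s y => deriv f (s*y) * y * deriv ψ y)
      (bound := fun y => C' * (|φ 0| + |φ 1|) * |deriv ψ y|)
      (x₀ := t) (a := φ 0) (b := φ 1) (μ := volume) (s := Metric.ball t (t/2)) (Metric.ball_mem_nhds t (half_pos ht))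
      (by
        filter_upwards with s
        exact ((hcf.comp (continuous_const.mul continuous_id)).aestronglyMeasurable.mul
          (measurable_deriv ψ).aestronglyMeasurable).restrict)
      (by
        apply ContinuousOn.intervalIntegrable
        exact ((hcf.comp (continuous_const.mul continuous_id)).continuousOn).mul
          (hψdcont.mono (by rw [uIcc_of_le hle])))
      (by
        exact (((hf'.comp (continuous_const.mul continuous_id)).mul
          continuous_id).aestronglyMeasurable.mul
          (measurable_deriv ψ).aestronglyMeasurable).restrict)
      (by
        apply ae_of_all
        intro y hy s _
        rw [norm_mul, norm_mul]
        have h1 : ‖deriv f (s*y)‖ * ‖y‖ ≤ C' * (|φ 0| + |φ 1|) := by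
          apply mul_le_mul (hC' _) (hM y hy) (abs_nonneg _)
          exact (norm_nonneg _).trans (hC' 0)
        exact mul_le_mul_of_nonneg_right h1 (abs_nonneg _))
      (by
        apply ContinuousOn.intervalIntegrable
        exact continuousOn_const.mul ((hψdcont.mono (by rw [uIcc_of_le hle])).abs))
      (by
        apply ae_of_all
        intro y _ s _
        have h1 : HasDerivAt (fun s : ℝ => f (s*y)) (deriv f (s*y) * y) s :=
          HasDerivAt.comp s (hdf (s*y)).hasDerivAt (hasDerivAt_mul_const y)
        exact h1.mul_const (deriv ψ y))).2
    have hval : ∫ x, deriv f x * (x / t) * g t x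
        = ∫ y in (φ 0)..(φ 1), deriv f (t*y) * y * deriv ψ y := by
      rw [lemA t ht (fun x => deriv f x * (x/t)) (hf'.mul (continuous_id.div_const t))]
      apply intervalIntegral.integral_congr
      intro y _
      have h3 : t * y / t = y := mul_div_cancel_left₀ y ht.ne'
      simp only [h3]
    constructor
    · rw [hval]
      apply hder.congr_of_eventuallyEq
      filter_upwards [Ioi_mem_nhds ht] with s hs
      exact lemA s hs f hcf
    · -- identification of the vector field
      have hwd : ∫ x, deriv f x * φ ((μ t (Iic x) / μ t univ).toReal) ∂(μ t)
          = ∫ x, g t x * (deriv f x * φ ((μ t (Iic x) / μ t univ).toReal)) := by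
        rw [hμt t ht]
        rw [show (fun x => ENNReal.ofReal (g t x))
            = (fun x => ((g t x).toNNReal : ℝ≥0∞)) from rfl]
        rw [integral_withDensity_eq_integral_smul (hg_meas t).real_toNNReal _]
        congr 1
        funext x
        simp [NNReal.smul_def, Real.coe_toNNReal _ (hg_nonneg t ht x)]
      rw [hwd]
      apply integral_congr_ae
      apply ae_of_all
      intro x
      show deriv f x * (x / t) * g t x
          = g t x * (deriv f x * φ ((μ t (Iic x) / μ t univ).toReal))
      by_cases hx : x ∈ Icc (t * φ 0) (t * φ 1)
      · have hx' := hmapsto t ht x hx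
        rw [hcdfdiv t ht x hx, ENNReal.toReal_ofReal (hψmem _ hx').1, hφψ _ hx']
        ring
      · have hz : g t x = 0 := by simp only [g, if_neg hx]
        rw [hz]
        ring
end
end

section
/- Let phi(alpha) = alpha - 1/2 on [0,1]. Then the curve mu(0) = delta_0 and, for t > 0, mu(t) = (1/t) chi_{[-t/2, t/2]} lambda (the uniform probability measure on [-t/2, t/2]) is the solution of the MDE dmu/dt = V_phi[mu] with initial datum delta_0: for every f in C_c^infinity(R), (1/t) integral from -t/2 to t/2 of f(x) dx tends to f(0) as t -> 0+, and for every t > 0, d/dt of (1/t) integral from -t/2 to t/2 of f(x) dx = (1/t) integral from -t/2 to t/2 of f'(x) (x/t) dx. -/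
open MeasureTheory Set Metric Filter ENNReal

noncomputable section

lemma hH (f : ℝ → ℝ) (hf : Continuous f) (x : ℝ) :
    HasDerivAt (fun u => ∫ y in (0:ℝ)..u, f y) (f x) x :=
  intervalIntegral.integral_hasDerivAt_right (hf.intervalIntegrable _ _)
    (hf.stronglyMeasurableAtFilter _ _) hf.continuousAt

lemma hF (f : ℝ → ℝ) (hf : Continuous f) (t : ℝ) :
    HasDerivAt (fun s : ℝ => ∫ x in (-s / 2)..(s / 2), f x)
      ((f (t / 2) + f (-t / 2)) / 2) t := by
  have heq : (fun s : ℝ => ∫ x in (-s / 2)..(s / 2), f x)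
      = fun s : ℝ => (∫ y in (0:ℝ)..(s / 2), f y) - ∫ y in (0:ℝ)..(-s / 2), f y := by
    funext s
    rw [intervalIntegral.integral_interval_sub_left (hf.intervalIntegrable _ _)
      (hf.intervalIntegrable _ _)]
  rw [heq]
  have h1 : HasDerivAt (fun s : ℝ => ∫ y in (0:ℝ)..(s / 2), f y) (f (t / 2) * (1 / 2)) t :=
    by have := (hH f hf (t / 2)).comp t ((hasDerivAt_id t).div_const 2); exact this
  have h2 : HasDerivAt (fun s : ℝ => ∫ y in (0:ℝ)..(-s / 2), f y) (f (-t / 2) * (-1 / 2)) t := by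
    have : HasDerivAt (fun s : ℝ => -s / 2) (-1 / 2) t := by
      simpa using ((hasDerivAt_id t).neg.div_const 2)
    exact (hH f hf (-t / 2)).comp t this
  exact (h1.fun_sub h2).congr_deriv (by ring)


/-- **Example (for `φ(α) = α - 1/2`, the uniform measures `μ(t) = (1/t)χ_{[-t/2,t/2]}λ`
solve the MDE `μ̇ = V_φ[μ]` with initial datum `δ₀`).** -/
theorem Vphi_uniform_solution :
    -- the solution `μ(0) = δ₀`, `μ(t) = (1/t) χ_{[-t/2,t/2]} λ` for `t > 0`:
    let μ : ℝ → Measure ℝ := fun t =>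
      if 0 < t then
        volume.withDensity (fun x => ENNReal.ofReal (if x ∈ Icc (-t / 2) (t / 2) then 1 / t else 0))
      else Measure.dirac 0
    -- `μ(t)` is the uniform probability measure on `[-t/2, t/2]`:
    (∀ t : ℝ, 0 < t → IsProbabilityMeasure (μ t)) ∧
    (∀ f : ℝ → ℝ, ContDiff ℝ (⊤ : ℕ∞) f → HasCompactSupport f →
      -- the initial datum is attained: `(1/t)∫_{-t/2}^{t/2} f → f(0)` as `t → 0⁺`:
      Tendsto (fun t : ℝ => (1 / t) * ∫ x in (-t / 2)..(t / 2), f x)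
        (nhdsWithin 0 (Ioi 0)) (nhds (f 0)) ∧
      -- the weak formulation of the MDE `μ̇ = V_φ[μ]` holds for every `t > 0`:
      ∀ t : ℝ, 0 < t →
        HasDerivAt (fun s : ℝ => (1 / s) * ∫ x in (-s / 2)..(s / 2), f x)
          ((1 / t) * ∫ x in (-t / 2)..(t / 2), deriv f x * (x / t)) t) := by
  intro μ
  constructor
  · -- probability measure
    intro t ht
    constructor
    have hμt : μ t = volume.withDensity
        (fun x => ENNReal.ofReal (if x ∈ Icc (-t / 2) (t / 2) then 1 / t else 0)) := if_pos ht
    rw [hμt]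
    have hfun : (fun x : ℝ => ENNReal.ofReal (if x ∈ Icc (-t / 2) (t / 2) then 1 / t else 0))
        = (Icc (-t / 2) (t / 2)).indicator (fun _ => ENNReal.ofReal (1 / t)) := by
      funext x
      by_cases h : x ∈ Icc (-t / 2) (t / 2) <;> simp [h, Set.indicator]
    rw [hfun, withDensity_apply _ MeasurableSet.univ, Measure.restrict_univ,
      lintegral_indicator measurableSet_Icc _, setLIntegral_const, Real.volume_Icc]
    have h1 : t / 2 - -t / 2 = t := by ring
    rw [h1, ← ENNReal.ofReal_mul (by positivity), one_div_mul_cancel ht.ne', ENNReal.ofReal_one]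
  · intro f hf hfc
    have hc : Continuous f := hf.continuous
    have hc' : Continuous (deriv f) := hf.continuous_deriv (by simp)
    constructor
    · -- initial datum
      have h0 : HasDerivAt (fun s : ℝ => ∫ x in (-s / 2)..(s / 2), f x) (f 0) 0 := by
        have := hF f hc 0
        simpa using this
      have := (hasDerivAt_iff_tendsto_slope.mp h0)
      have hs : (fun t : ℝ => (1 / t) * ∫ x in (-t / 2)..(t / 2), f x)
          = slope (fun s : ℝ => ∫ x in (-s / 2)..(s / 2), f x) 0 := by
        funext t
        simp [slope_def_field, div_eq_inv_mul, one_div]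
      rw [hs]
      exact this.mono_left (nhdsWithin_mono _ (fun x hx => ne_of_gt hx))
    · intro t ht
      -- integration by parts
      have hderiv : ∀ x ∈ uIcc (-t / 2) (t / 2), HasDerivAt f (deriv f x) x := fun x _ =>
        ((hf.differentiable (by simp)) x).hasDerivAt
      have hid : ∀ x ∈ uIcc (-t / 2) (t / 2), HasDerivAt (fun y : ℝ => y) 1 x := fun x _ =>
        hasDerivAt_id x
      have key : ∫ x in (-t / 2)..(t / 2), x * deriv f x
          = (t / 2) * f (t / 2) - (-t / 2) * f (-t / 2) - ∫ x in (-t / 2)..(t / 2), 1 * f x := by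
        exact intervalIntegral.integral_mul_deriv_eq_deriv_mul hid hderiv
          ((continuous_const).intervalIntegrable _ _) (hc'.intervalIntegrable _ _)
      have hInt : (∫ x in (-t / 2)..(t / 2), deriv f x * (x / t))
          = t⁻¹ * ∫ x in (-t / 2)..(t / 2), x * deriv f x := by
        rw [← intervalIntegral.integral_const_mul]
        congr 1; funext x; ring
      have hmain : HasDerivAt (fun s : ℝ => (1 / s) * ∫ x in (-s / 2)..(s / 2), f x)
          (-(t ^ 2)⁻¹ * (∫ x in (-t / 2)..(t / 2), f x)
            + t⁻¹ * ((f (t / 2) + f (-t / 2)) / 2)) t := by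
        have hinv : HasDerivAt (fun s : ℝ => 1 / s) (-(t ^ 2)⁻¹) t := by
          simpa [one_div] using hasDerivAt_inv ht.ne'
        simpa [one_div] using hinv.fun_mul (hF f hc t)
      convert hmain using 1
      rw [hInt, key]
      simp only [one_mul]
      field_simp
      ring
end
end
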